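/- Define e_0, e_1, e_2 : {0,1,2}^N x {0,1}^N -> {0,1,2}^N by interleaving: e_i((t, b)) is the sequence whose entries in blocks of three are (t_{6k+2i}, t_{6k+2i+1}, b_k) for k = 0, 1, 2, .... Then for all p = (t,b) and p' = (t',b') with t != t', sqrt(delta_3(t, t')) <= 3 * max(delta_3(e_0(p), e_0(p')), delta_3(e_1(p), e_1(p')), delta_3(e_2(p), e_2(p'))). -/

import Mathlib

-- The ternary ultrametric `δ₃` on ternary sequences.
open Classical in
noncomputable def delta3 (s t : ℕ → Fin 3) : ℝ :=
  if h : s = t then 0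
  else (3 : ℝ) ^ (-(Nat.find (show ∃ k, s k ≠ t k by
    by_contra hc; push_neg at hc; exact h (funext hc)) : ℤ))

-- The real number represented in base 3 by a ternary digit sequence.
noncomputable def val3 (s : ℕ → Fin 3) : ℝ := ∑' k, (s k : ℝ) / 3 ^ (k + 1)

-- The interleaving maps `e_i` sending `(t, b)` to the sequence with blocks
-- `(t (6k+2i), t (6k+2i+1), b k)` for `k = 0, 1, 2, ...`.
def interleave (i : Fin 3) (p : (ℕ → Fin 3) × (ℕ → Fin 2)) : ℕ → Fin 3 := fun n =>
  if n % 3 = 0 then p.1 (6 * (n / 3) + 2 * (i : ℕ))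
  else if n % 3 = 1 then p.1 (6 * (n / 3) + 2 * (i : ℕ) + 1)
  else (p.2 (n / 3)).castSucc

/-!
If `t` and `t'` first differ at index `n`, the digit `t n` is copied by the interleaving map
`e_i` with `i = (n mod 6) / 2` to position `3 ⌊n / 6⌋ + (n mod 2) ≤ ⌊n / 2⌋ + 1`. Hence
`δ₃(e_i p, e_i p') ≥ 3 ^ -(⌊n / 2⌋ + 1)`, and `√δ₃(t, t') = 3 ^ (-n / 2)` is at most three
times that.
-/

lemma zpow_neg_le_delta3 {s t : ℕ → Fin 3} {j : ℕ} (hj : s j ≠ t j) :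
    (3 : ℝ) ^ (-(j : ℤ)) ≤ delta3 s t := by
  have hst : s ≠ t := fun he => hj (congrFun he j)
  rw [delta3, dif_neg hst]
  exact zpow_le_zpow_right₀ (by norm_num) (neg_le_neg (Int.ofNat_le.mpr (Nat.find_le hj)))

lemma exists_delta3_eq_zpow {s t : ℕ → Fin 3} (h : s ≠ t) :
    ∃ n, s n ≠ t n ∧ delta3 s t = (3 : ℝ) ^ (-(n : ℤ)) := by
  have hex : ∃ k, s k ≠ t k := Function.ne_iff.mp h
  exact ⟨Nat.find hex, Nat.find_spec hex, by rw [delta3, dif_neg h]⟩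

def interleaveIndex (n : ℕ) : Fin 3 := ⟨n % 6 / 2, by omega⟩

def interleavePos (n : ℕ) : ℕ := 3 * (n / 6) + n % 2

lemma interleave_interleaveIndex_interleavePos (q : (ℕ → Fin 3) × (ℕ → Fin 2)) (n : ℕ) :
    interleave (interleaveIndex n) q (interleavePos n) = q.1 n := by
  have hi : ((interleaveIndex n : Fin 3) : ℕ) = n % 6 / 2 := rfl
  unfold interleave interleavePos
  rw [hi]
  rcases Nat.mod_two_eq_zero_or_one n with h2 | h2
  · rw [if_pos (by omega)]
    exact congrArg q.1 (by omega)
  · rw [if_neg (by omega), if_pos (by omega)]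
    exact congrArg q.1 (by omega)

lemma interleavePos_le (n : ℕ) : interleavePos n ≤ n / 2 + 1 := by
  unfold interleavePos
  omega

lemma zpow_neg_le_delta3_interleave {p p' : (ℕ → Fin 3) × (ℕ → Fin 2)} {n : ℕ}
    (hn : p.1 n ≠ p'.1 n) :
    (3 : ℝ) ^ (-(interleavePos n : ℤ)) ≤
      delta3 (interleave (interleaveIndex n) p) (interleave (interleaveIndex n) p') :=
  zpow_neg_le_delta3 (by
    rwa [interleave_interleaveIndex_interleavePos, interleave_interleaveIndex_interleavePos])

lemma zpow_neg_le_sq_mul_zpow_neg {a : ℝ} (ha : 1 ≤ a) {m n : ℕ} (h : 2 * m ≤ n + 2) :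
    a ^ (-(n : ℤ)) ≤ (a * a ^ (-(m : ℤ))) ^ 2 := by
  have ha0 : a ≠ 0 := by positivity
  calc a ^ (-(n : ℤ)) ≤ a ^ (2 - 2 * (m : ℤ)) := zpow_le_zpow_right₀ ha (by omega)
    _ = (a * a ^ (-(m : ℤ))) ^ 2 := by
      rw [mul_pow, ← zpow_natCast, ← zpow_natCast (a ^ _), ← zpow_mul, ← zpow_add₀ ha0]
      congr 1
      push_cast
      ring

lemma le_max_fin_three {α : Type*} [LinearOrder α] (f : Fin 3 → α) (i : Fin 3) :
    f i ≤ max (f 0) (max (f 1) (f 2)) := by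
  fin_cases i <;> simp

theorem stmt_5 (p p' : (ℕ → Fin 3) × (ℕ → Fin 2)) (h : p.1 ≠ p'.1) :
    Real.sqrt (delta3 p.1 p'.1) ≤
      3 * max (delta3 (interleave 0 p) (interleave 0 p'))
          (max (delta3 (interleave 1 p) (interleave 1 p'))
            (delta3 (interleave 2 p) (interleave 2 p'))) := by
  obtain ⟨n, hn, hδ⟩ := exists_delta3_eq_zpow h
  set M := max (delta3 (interleave 0 p) (interleave 0 p'))
    (max (delta3 (interleave 1 p) (interleave 1 p')) (delta3 (interleave 2 p) (interleave 2 p')))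
  have hM : (3 : ℝ) ^ (-(interleavePos n : ℤ)) ≤ M :=
    (zpow_neg_le_delta3_interleave hn).trans
      (le_max_fin_three (fun i => delta3 (interleave i p) (interleave i p')) _)
  have hM0 : 0 ≤ M := (zpow_pos (by norm_num) _).le.trans hM
  rw [hδ, Real.sqrt_le_left (by positivity)]
  calc (3 : ℝ) ^ (-(n : ℤ)) ≤ (3 * 3 ^ (-(interleavePos n : ℤ))) ^ 2 :=
        zpow_neg_le_sq_mul_zpow_neg (by norm_num) (by have := interleavePos_le n; omega)
    _ ≤ (3 * M) ^ 2 := by gcongr
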